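/- Fix a real constant α. Let R(J, v) be a smooth real-valued function on an open subset of {(J, v) : J > 0} ⊆ ℝ², and define M(ξ, v) := R(e^{ξ}, v) − 2ξ on the corresponding open set. Then R satisfies 4 (e^{R})_{JJ} + R_{vv} + 2 sin α · (J R_J)_v + J (J R_J)_J = 0 if and only if M satisfies M_{vv} + 2 sin α · M_{vξ} + M_{ξξ} + 4 e^{M} (M_{ξξ} + (M_ξ)² + 3 M_ξ + 2) = 0. -/

import Mathlib

/-! With `J = e^ξ` the chain rule gives `M_ξ = J R_J - 2`, `M_ξξ = J R_J + J² R_JJ`,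
`M_ξv = J R_Jv`, `M_vv = R_vv` and `e^M = e^R / J²`. Hence
`e^M (M_ξξ + M_ξ² + 3 M_ξ + 2) = e^R (R_JJ + R_J²) = (e^R)_JJ`, and, using the symmetry
`R_Jv = R_vJ` of the mixed partials, the left-hand sides of the two equations agree at
corresponding points `(J, v) = (e^ξ, v)`. Every point of `U` is of this form since `J > 0`. -/

noncomputable section

def p1 (H : ℝ → ℝ → ℝ) : ℝ → ℝ → ℝ := fun a b => deriv (fun s => H s b) a
def p2 (H : ℝ → ℝ → ℝ) : ℝ → ℝ → ℝ := fun a b => deriv (fun s => H a s) b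

open Function Filter Topology Real

section Partials

variable {F : ℝ → ℝ → ℝ} {U : Set (ℝ × ℝ)} {a b : ℝ}

theorem hasDerivAt_slice_fst (h : DifferentiableAt ℝ (uncurry F) (a, b)) :
    HasDerivAt (fun s => F s b) (fderiv ℝ (uncurry F) (a, b) (1, 0)) a :=
  h.hasFDerivAt.comp_hasDerivAt (f := fun s => (s, b)) a
    ((hasDerivAt_id a).prodMk (hasDerivAt_const a b))

theorem hasDerivAt_slice_snd (h : DifferentiableAt ℝ (uncurry F) (a, b)) :
    HasDerivAt (fun s => F a s) (fderiv ℝ (uncurry F) (a, b) (0, 1)) b :=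
  h.hasFDerivAt.comp_hasDerivAt (f := fun s => (a, s)) b
    ((hasDerivAt_const b a).prodMk (hasDerivAt_id b))

theorem p1_eq_fderiv (h : DifferentiableAt ℝ (uncurry F) (a, b)) :
    p1 F a b = fderiv ℝ (uncurry F) (a, b) (1, 0) :=
  (hasDerivAt_slice_fst h).deriv

theorem p2_eq_fderiv (h : DifferentiableAt ℝ (uncurry F) (a, b)) :
    p2 F a b = fderiv ℝ (uncurry F) (a, b) (0, 1) :=
  (hasDerivAt_slice_snd h).deriv

variable {m n : WithTop ℕ∞}

theorem ContDiffOn.differentiableAt_of_isOpen {E : Type*} [NormedAddCommGroup E]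
    [NormedSpace ℝ E] {f : ℝ × ℝ → E} {p : ℝ × ℝ} (hf : ContDiffOn ℝ n f U) (hU : IsOpen U)
    (hn : n ≠ 0) (hp : p ∈ U) : DifferentiableAt ℝ f p :=
  (hf.contDiffAt (hU.mem_nhds hp)).differentiableAt hn

theorem ContDiffOn.uncurry_p1 (hF : ContDiffOn ℝ n (uncurry F) U) (hU : IsOpen U)
    (hmn : m + 1 ≤ n) : ContDiffOn ℝ m (uncurry (p1 F)) U :=
  ((hF.fderiv_of_isOpen hU hmn).clm_apply contDiffOn_const).congr fun _ hp =>
    p1_eq_fderiv (hF.differentiableAt_of_isOpen hU (ne_bot_of_le_ne_bot (by simp) hmn) hp)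

theorem ContDiffOn.uncurry_p2 (hF : ContDiffOn ℝ n (uncurry F) U) (hU : IsOpen U)
    (hmn : m + 1 ≤ n) : ContDiffOn ℝ m (uncurry (p2 F)) U :=
  ((hF.fderiv_of_isOpen hU hmn).clm_apply contDiffOn_const).congr fun _ hp =>
    p2_eq_fderiv (hF.differentiableAt_of_isOpen hU (ne_bot_of_le_ne_bot (by simp) hmn) hp)

theorem p1_p2_eq_p2_p1 (hF : ContDiffOn ℝ 2 (uncurry F) U) (hU : IsOpen U) (hab : (a, b) ∈ U) :
    p1 (p2 F) a b = p2 (p1 F) a b := by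
  set f := uncurry F
  have hf' : HasFDerivAt (fderiv ℝ f) (fderiv ℝ (fderiv ℝ f) (a, b)) (a, b) :=
    ((hF.fderiv_of_isOpen hU (m := 1) (by norm_num)).differentiableAt_of_isOpen hU one_ne_zero
      hab).hasFDerivAt
  have hp2 : uncurry (p2 F) =ᶠ[𝓝 (a, b)] fun q => fderiv ℝ f q (0, 1) :=
    eventually_of_mem (hU.mem_nhds hab) fun q hq =>
      p2_eq_fderiv (hF.differentiableAt_of_isOpen hU two_ne_zero hq)
  have hp1 : uncurry (p1 F) =ᶠ[𝓝 (a, b)] fun q => fderiv ℝ f q (1, 0) :=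
    eventually_of_mem (hU.mem_nhds hab) fun q hq =>
      p1_eq_fderiv (hF.differentiableAt_of_isOpen hU two_ne_zero hq)
  have hdiff : ∀ G : ℝ → ℝ → ℝ, ContDiffOn ℝ 1 (uncurry G) U →
      DifferentiableAt ℝ (uncurry G) (a, b) := fun G hG =>
    hG.differentiableAt_of_isOpen hU one_ne_zero hab
  rw [p1_eq_fderiv (hdiff _ (hF.uncurry_p2 hU (by norm_num))),
    p2_eq_fderiv (hdiff _ (hF.uncurry_p1 hU (by norm_num))), hp2.fderiv_eq, hp1.fderiv_eq,
    (hf'.clm_apply (hasFDerivAt_const _ _)).fderiv, (hf'.clm_apply (hasFDerivAt_const _ _)).fderiv]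
  simpa using second_derivative_symmetric_of_eventually
    (eventually_of_mem (hU.mem_nhds hab) fun q hq =>
      (hF.differentiableAt_of_isOpen hU two_ne_zero hq).hasFDerivAt) hf' (1, 0) (0, 1)

end Partials

theorem deriv_deriv_exp_comp {g : ℝ → ℝ} {x : ℝ} (hg : ∀ᶠ y in 𝓝 x, DifferentiableAt ℝ g y)
    (hg' : DifferentiableAt ℝ (deriv g) x) :
    deriv (deriv fun y => exp (g y)) x = exp (g x) * (deriv (deriv g) x + deriv g x ^ 2) := by
  have h : (deriv fun y => exp (g y)) =ᶠ[𝓝 x] fun y => exp (g y) * deriv g y :=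
    hg.mono fun y hy => hy.hasDerivAt.exp.deriv
  have h' : HasDerivAt (fun y => exp (g y) * deriv g y)
      (exp (g x) * deriv g x * deriv g x + exp (g x) * deriv (deriv g) x) x :=
    hg.self_of_nhds.hasDerivAt.exp.mul hg'.hasDerivAt
  rw [h.deriv_eq, h'.deriv]
  ring

section LogarithmicVariable

variable {R M : ℝ → ℝ → ℝ} {ξ v : ℝ}

theorem p1_eq_of_comp_exp (hM : ∀ ξ v, M ξ v = R (exp ξ) v - 2 * ξ)
    (hR : DifferentiableAt ℝ (fun s => R s v) (exp ξ)) :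
    p1 M ξ v = exp ξ * p1 R (exp ξ) v - 2 := by
  have h : HasDerivAt (fun s => R (exp s) v - 2 * s) (p1 R (exp ξ) v * exp ξ - 2 * 1) ξ :=
    (hR.hasDerivAt.comp ξ (hasDerivAt_exp ξ)).sub ((hasDerivAt_id ξ).const_mul 2)
  rw [p1, funext fun s => hM s v, h.deriv]
  ring

theorem p2_eq_of_comp_exp (hM : ∀ ξ v, M ξ v = R (exp ξ) v - 2 * ξ) :
    p2 M ξ v = p2 R (exp ξ) v := by
  simp only [p2, funext (hM ξ), deriv_sub_const]

theorem p2_p2_eq_of_comp_exp (hM : ∀ ξ v, M ξ v = R (exp ξ) v - 2 * ξ) :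
    p2 (p2 M) ξ v = p2 (p2 R) (exp ξ) v := by
  show deriv (fun s => p2 M ξ s) v = deriv (fun s => p2 R (exp ξ) s) v
  simp only [p2_eq_of_comp_exp hM]

theorem p1_p2_eq_of_comp_exp (hM : ∀ ξ v, M ξ v = R (exp ξ) v - 2 * ξ)
    (hR : DifferentiableAt ℝ (fun s => p2 R s v) (exp ξ)) :
    p1 (p2 M) ξ v = exp ξ * p1 (p2 R) (exp ξ) v := by
  have h : HasDerivAt (fun t => p2 R (exp t) v) (p1 (p2 R) (exp ξ) v * exp ξ) ξ :=
    hR.hasDerivAt.comp ξ (hasDerivAt_exp ξ)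
  rw [p1, funext fun t => p2_eq_of_comp_exp hM (ξ := t), h.deriv, mul_comm]

theorem p1_p1_eq_of_comp_exp (hM : ∀ ξ v, M ξ v = R (exp ξ) v - 2 * ξ)
    (hR : ∀ᶠ t in 𝓝 ξ, DifferentiableAt ℝ (fun s => R s v) (exp t))
    (hR' : DifferentiableAt ℝ (fun s => p1 R s v) (exp ξ)) :
    p1 (p1 M) ξ v = exp ξ * p1 R (exp ξ) v + exp ξ ^ 2 * p1 (p1 R) (exp ξ) v := by
  have h : (fun t => p1 M t v) =ᶠ[𝓝 ξ] fun t => exp t * p1 R (exp t) v - 2 :=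
    hR.mono fun t ht => p1_eq_of_comp_exp hM ht
  have h' : HasDerivAt (fun t => exp t * p1 R (exp t) v - 2)
      (exp ξ * p1 R (exp ξ) v + exp ξ * (p1 (p1 R) (exp ξ) v * exp ξ)) ξ :=
    ((hasDerivAt_exp ξ).mul (hR'.hasDerivAt.comp ξ (hasDerivAt_exp ξ))).sub_const 2
  rw [p1, h.deriv_eq, h'.deriv]
  ring

end LogarithmicVariable

def rOperator (α : ℝ) (R : ℝ → ℝ → ℝ) (J v : ℝ) : ℝ :=
  4 * deriv (fun s => deriv (fun r => Real.exp (R r v)) s) J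
    + p2 (p2 R) J v
    + 2 * Real.sin α * deriv (fun s => J * p1 R J s) v
    + J * deriv (fun s => s * p1 R s v) J

def mOperator (α : ℝ) (M : ℝ → ℝ → ℝ) (ξ v : ℝ) : ℝ :=
  p2 (p2 M) ξ v + 2 * Real.sin α * p1 (p2 M) ξ v + p1 (p1 M) ξ v
    + 4 * Real.exp (M ξ v) * (p1 (p1 M) ξ v + (p1 M ξ v) ^ 2 + 3 * p1 M ξ v + 2)

theorem rOperator_exp_eq_mOperator (α : ℝ) {U : Set (ℝ × ℝ)} (hU : IsOpen U) {R M : ℝ → ℝ → ℝ}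
    (hR : ContDiffOn ℝ 2 (uncurry R) U) (hM : ∀ ξ v, M ξ v = R (exp ξ) v - 2 * ξ) {ξ v : ℝ}
    (hξv : (exp ξ, v) ∈ U) : rOperator α R (exp ξ) v = mOperator α M ξ v := by
  have hdiff : ∀ G : ℝ → ℝ → ℝ, ContDiffOn ℝ 1 (uncurry G) U →
      DifferentiableAt ℝ (fun s => G s v) (exp ξ) := fun G hG =>
    (hasDerivAt_slice_fst (hG.differentiableAt_of_isOpen hU one_ne_zero hξv)).differentiableAt
  have hp1R := hdiff _ (hR.uncurry_p1 hU (by norm_num))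
  have hp2R := hdiff _ (hR.uncurry_p2 hU (by norm_num))
  have hRnear : ∀ᶠ s in 𝓝 (exp ξ), DifferentiableAt ℝ (fun r => R r v) s := by
    have : ∀ᶠ s in 𝓝 (exp ξ), (s, v) ∈ U :=
      (continuous_id.prodMk continuous_const).continuousAt.preimage_mem_nhds (hU.mem_nhds hξv)
    exact this.mono fun s hs =>
      (hasDerivAt_slice_fst (hR.differentiableAt_of_isOpen hU two_ne_zero hs)).differentiableAt
  have hRexp : ∀ᶠ t in 𝓝 ξ, DifferentiableAt ℝ (fun r => R r v) (exp t) :=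
    continuous_exp.continuousAt.eventually hRnear
  have hexpR : deriv (fun s => deriv (fun r => exp (R r v)) s) (exp ξ)
      = exp (R (exp ξ) v) * (p1 (p1 R) (exp ξ) v + p1 R (exp ξ) v ^ 2) :=
    deriv_deriv_exp_comp hRnear hp1R
  have hcross : deriv (fun s => exp ξ * p1 R (exp ξ) s) v = exp ξ * p2 (p1 R) (exp ξ) v :=
    deriv_const_mul_field _
  have hJ : HasDerivAt (fun s => s * p1 R s v)
      (1 * p1 R (exp ξ) v + exp ξ * p1 (p1 R) (exp ξ) v) (exp ξ) :=
    (hasDerivAt_id' _).mul hp1R.hasDerivAt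
  have hexpM : exp (M ξ v) = exp (R (exp ξ) v) / exp ξ ^ 2 := by
    rw [hM, exp_sub, ← exp_nat_mul]
    norm_num
  rw [rOperator, mOperator, hexpR, hcross, hJ.deriv,
    p2_p2_eq_of_comp_exp hM, p1_p2_eq_of_comp_exp hM hp2R, p1_p1_eq_of_comp_exp hM hRexp hp1R,
    p1_eq_of_comp_exp hM hRnear.self_of_nhds, p1_p2_eq_p2_p1 hR hU hξv, hexpM]
  field_simp
  ring

theorem R_equation_iff_M_equation (α : ℝ) (U : Set (ℝ × ℝ)) (hU : IsOpen U)
    (hUpos : ∀ p ∈ U, 0 < p.1)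
    (R : ℝ → ℝ → ℝ)
    (hR : ContDiffOn ℝ (⊤ : ℕ∞) (fun p : ℝ × ℝ => R p.1 p.2) U)
    (M : ℝ → ℝ → ℝ)
    (hM : ∀ ξ v : ℝ, M ξ v = R (Real.exp ξ) v - 2 * ξ) :
    (∀ J v : ℝ, (J, v) ∈ U →
        4 * deriv (fun s => deriv (fun r => Real.exp (R r v)) s) J
          + p2 (p2 R) J v
          + 2 * Real.sin α * deriv (fun s => J * p1 R J s) v
          + J * deriv (fun s => s * p1 R s v) J = 0)
    ↔ (∀ ξ v : ℝ, (Real.exp ξ, v) ∈ U →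
        p2 (p2 M) ξ v + 2 * Real.sin α * p1 (p2 M) ξ v + p1 (p1 M) ξ v
          + 4 * Real.exp (M ξ v)
            * (p1 (p1 M) ξ v + (p1 M ξ v) ^ 2 + 3 * p1 M ξ v + 2) = 0) := by
  have key : ∀ ξ v, (exp ξ, v) ∈ U → rOperator α R (exp ξ) v = mOperator α M ξ v :=
    fun ξ v hξv =>
      rOperator_exp_eq_mOperator α hU (hR.of_le (WithTop.coe_le_coe.mpr le_top)) hM hξv
  constructor
  · intro h ξ v hξv
    exact (key ξ v hξv).symm.trans (h _ v hξv)
  · intro h J v hJv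
    obtain ⟨ξ, rfl⟩ : ∃ ξ, exp ξ = J := ⟨log J, exp_log (hUpos _ hJv)⟩
    exact (key ξ v hJv).trans (h ξ v hJv)

end
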